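/- arXiv:2603.05678 — 4 statements merged into one kernel-verified Lean document; each statement's English description precedes it below -/
import Mathlib

section
/- In Blackwell's bet with two envelopes containing distinct amounts S < L, where an envelope is chosen uniformly at random and a random threshold r is drawn independently from a distribution, the strategy 'keep if r < observed amount, switch if r > observed amount' succeeds with probability 1/2 + (1/2)·P(S < r < L). -/
open MeasureTheory Set

/-- Blackwell's bet: with amounts `S < L`, envelope chosen by a fair coin, and an
independent threshold drawn from `μ` (with `μ {S} = μ {L} = 0`), the strategy
"keep if the threshold is below the observed amount, otherwise switch"
succeeds with probability `1/2 + (1/2) · μ (S, L)`. -/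
theorem blackwell_bet_success (S L : ℝ) (hSL : S < L)
    (μ : Measure ℝ) [IsProbabilityMeasure μ]
    (hS : μ {S} = 0) (hL : μ {L} = 0) :
    (1/2) * (1 - (μ (Set.Iio S)).toReal) + (1/2) * (1 - (μ (Set.Ioi L)).toReal)
      = 1/2 + (1/2) * (μ (Set.Ioo S L)).toReal := by
  have h1 : μ (Iio S) + μ (Ici S) = 1 := by
    rw [← measure_univ (μ := μ), ← Iio_union_Ici (a := S)]
    exact (measure_union (Iio_disjoint_Ici le_rfl) measurableSet_Ici).symm
  have h2 : μ (Ici S) = μ (Ioi S) := by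
    have : Ici S = {S} ∪ Ioi S := by
      ext x; simp [le_iff_lt_or_eq, or_comm, eq_comm]
    rw [this, measure_union (by simp) measurableSet_Ioi, hS, zero_add]
  have h3 : μ (Ioi S) = μ (Ioo S L) + μ (Ici L) := by
    rw [← Ioo_union_Ici_eq_Ioi hSL]
    exact measure_union (Set.disjoint_left.2 fun x hx hx2 => absurd hx2 (not_le.2 hx.2)) measurableSet_Ici
  have h4 : μ (Ici L) = μ (Ioi L) := by
    have : Ici L = {L} ∪ Ioi L := by
      ext x; simp [le_iff_lt_or_eq, or_comm, eq_comm]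
    rw [this, measure_union (by simp) measurableSet_Ioi, hL, zero_add]
  have hsum : μ (Iio S) + (μ (Ioo S L) + μ (Ioi L)) = 1 := by
    rw [← h4, ← h3, ← h2]; exact h1
  have fS : μ (Iio S) ≠ ⊤ := measure_ne_top μ _
  have fO : μ (Ioo S L) ≠ ⊤ := measure_ne_top μ _
  have fL : μ (Ioi L) ≠ ⊤ := measure_ne_top μ _
  have hr : (μ (Iio S)).toReal + ((μ (Ioo S L)).toReal + (μ (Ioi L)).toReal) = 1 := by
    rw [← ENNReal.toReal_add fO fL, ← ENNReal.toReal_add fS (by finiteness), hsum]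
    simp
  linarith
end

section
/- If the threshold distribution μ assigns positive probability to the open interval (S, L), then Blackwell's strategy succeeds with probability strictly greater than 1/2. -/
/-!
The strategy loses exactly when `r < S` (it keeps the small envelope) or `r > L` (it leaves the
large one). The sets `Iio S`, `Ioo S L`, `Ioi L` are disjoint, so the two losing masses add up to
at most `1 - μ (Ioo S L) < 1`.
-/

open MeasureTheory Set

section ThresholdMass

variable {α : Type*} [LinearOrder α] [TopologicalSpace α] [OrderClosedTopology α]
  [MeasurableSpace α] [OpensMeasurableSpace α] (μ : Measure α)

theorem measureReal_Iio_add_measureReal_Ioo_le [IsFiniteMeasure μ] {a b : α} (hab : a ≤ b) :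
    μ.real (Iio a) + μ.real (Ioo a b) ≤ μ.real (Iio b) := by
  have hdisj : Disjoint (Iio a) (Ioo a b) :=
    (Iio_disjoint_Ici le_rfl).mono_right (Ioo_subset_Icc_self.trans Icc_subset_Ici_self)
  rw [← measureReal_union hdisj measurableSet_Ioo]
  exact measureReal_mono (union_subset (Iio_subset_Iio hab) fun _ hx => hx.2)

theorem measureReal_Iio_add_measureReal_Ioi_le_one [IsZeroOrProbabilityMeasure μ] (b : α) :
    μ.real (Iio b) + μ.real (Ioi b) ≤ 1 := by
  rw [← measureReal_union ((Iio_disjoint_Ici le_rfl).mono_right Ioi_subset_Ici_self)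
    measurableSet_Ioi]
  exact measureReal_le_one

end ThresholdMass

theorem blackwell_bet_gt_half_general (S L : ℝ) (hSL : S < L)
    (μ : Measure ℝ) [IsProbabilityMeasure μ]
    (hpos : 0 < μ (Set.Ioo S L)) :
    1/2 < (1/2) * (1 - (μ (Set.Iio S)).toReal) + (1/2) * (1 - (μ (Set.Ioi L)).toReal) := by
  have hmid : 0 < μ.real (Ioo S L) := ENNReal.toReal_pos hpos.ne' (measure_ne_top μ _)
  have hleft := measureReal_Iio_add_measureReal_Ioo_le μ hSL.le
  have htotal := measureReal_Iio_add_measureReal_Ioi_le_one μ L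
  simp only [← measureReal_def]
  linarith

/-- If the threshold distribution assigns positive probability to the open interval
`(S, L)`, Blackwell's strategy succeeds with probability strictly greater than `1/2`. -/
theorem blackwell_bet_gt_half (S L : ℝ) (hSL : S < L)
    (μ : Measure ℝ) [IsProbabilityMeasure μ]
    (hS : μ {S} = 0) (hL : μ {L} = 0)
    (hpos : 0 < μ (Set.Ioo S L)) :
    1/2 < (1/2) * (1 - (μ (Set.Iio S)).toReal) + (1/2) * (1 - (μ (Set.Ioi L)).toReal) :=
  blackwell_bet_gt_half_general S L hSL μ hpos
end

section
/- With N equally spaced stations on a circle of circumference 1 (spacing 1/N), and the light L on the major arc joining the two neighbors A, B of the destination W, the Demon's postdiction strategy succeeds with probability exactly 1/2 + 1/N. -/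
open MeasureTheory Set

/-- With `N` equally spaced stations (spacing `1/N`) on a circle of circumference 1,
destination `W = 0`, neighbors `A = 1 - 1/N` and `B = 1/N`, and the light `L = ℓ`
on the major arc joining `A` and `B`, the Demon's postdiction strategy -- train at
`A` or `B` with probability `1/2` each, `R` uniform, guess that `W` lies on the arc
from the current position to `L` containing `R` -- succeeds with probability
exactly `1/2 + 1/N`. -/
theorem postdiction_success (N : ℕ) (hN : 3 ≤ N) (ℓ : ℝ)
    (hℓ₁ : 1 / N < ℓ) (hℓ₂ : ℓ < 1 - 1 / N) :
    (1/2) * (volume (Set.Ico (1 - 1/(N:ℝ)) 1 ∪ Set.Icc 0 ℓ)).toReal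
      + (1/2) * (volume (Set.Icc (0:ℝ) (1/N) ∪ Set.Ico ℓ 1)).toReal
      = 1/2 + 1 / N := by
  have hNpos : (0:ℝ) < N := by positivity
  have h0 : (0:ℝ) < 1 / N := by positivity
  have hℓ0 : (0:ℝ) ≤ ℓ := le_of_lt (h0.trans hℓ₁)
  have hℓ1 : ℓ ≤ 1 := le_of_lt (hℓ₂.trans_le (by linarith))
  have hd1 : Disjoint (Set.Ico (1 - 1/(N:ℝ)) 1) (Set.Icc 0 ℓ) := by
    rw [Set.disjoint_left]
    rintro x ⟨hx1, _⟩ ⟨_, hx2⟩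
    linarith
  have hd2 : Disjoint (Set.Icc (0:ℝ) (1/N)) (Set.Ico ℓ 1) := by
    rw [Set.disjoint_left]
    rintro x ⟨_, hx1⟩ ⟨hx2, _⟩
    linarith
  rw [measure_union hd1 measurableSet_Icc, measure_union hd2 measurableSet_Ico,
    Real.volume_Ico, Real.volume_Icc, Real.volume_Icc, Real.volume_Ico,
    ← ENNReal.ofReal_add (by linarith) (by linarith),
    ← ENNReal.ofReal_add (by linarith) (by linarith),
    ENNReal.toReal_ofReal (by linarith), ENNReal.toReal_ofReal (by linarith)]
  ring
end

section
/- In the two-envelope problem with amounts S < L and threshold r drawn from a continuous strictly increasing CDF F on ℝ, Blackwell's strategy succeeds with probability 1/2 + (F(L) − F(S))/2 > 1/2. -/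
open MeasureTheory Set Filter Topology

lemma measure_Iio_toReal_eq (μ : Measure ℝ) [IsProbabilityMeasure μ]
    (F : ℝ → ℝ) (hF : ∀ x, F x = (μ (Set.Iic x)).toReal)
    (hcont : Continuous F) (x : ℝ) : (μ (Set.Iio x)).toReal = F x := by
  set s : ℕ → Set ℝ := fun n => Set.Iic (x - 1 / (n + 1)) with hs
  have hmonos : Monotone s := by
    intro m n hmn
    apply Set.Iic_subset_Iic.2
    have : (1 : ℝ) / (n + 1) ≤ 1 / (m + 1) := by
      apply one_div_le_one_div_of_le <;> [positivity; exact_mod_cast by omega]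
    linarith
  have hUnion : (⋃ n, s n) = Set.Iio x := by
    ext y
    simp only [Set.mem_iUnion, Set.mem_Iic, Set.mem_Iio, hs]
    constructor
    · rintro ⟨n, hn⟩
      have : (0:ℝ) < 1 / (n + 1) := by positivity
      linarith
    · intro hy
      obtain ⟨n, hn⟩ := exists_nat_one_div_lt (sub_pos.2 hy)
      exact ⟨n, by linarith⟩
  have h1 : Tendsto (fun n => μ (s n)) atTop (𝓝 (μ (Set.Iio x))) := by
    rw [← hUnion]
    exact tendsto_measure_iUnion_atTop hmonos
  have h2 : Tendsto (fun n => (μ (s n)).toReal) atTop (𝓝 ((μ (Set.Iio x)).toReal)) := by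
    apply Tendsto.comp (ENNReal.tendsto_toReal (measure_ne_top μ _)) h1
  have h3 : Tendsto (fun n : ℕ => F (x - 1 / (n + 1))) atTop (𝓝 (F x)) := by
    apply (hcont.tendsto x).comp
    have : Tendsto (fun n : ℕ => (1:ℝ) / (n + 1)) atTop (𝓝 0) :=
      tendsto_one_div_add_atTop_nhds_zero_nat
    have := tendsto_const_nhds (x := x) (f := atTop (α := ℕ)) |>.sub this
    simpa using this
  have heq : (fun n : ℕ => F (x - 1 / (n + 1))) = fun n => (μ (s n)).toReal := by
    funext n; rw [hF]
  rw [heq] at h3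
  exact tendsto_nhds_unique h2 h3

/-- Blackwell's bet with the threshold drawn from a measure `μ` whose CDF
`F x = μ (Iic x)` is continuous and strictly increasing: with amounts `S < L`,
the strategy "keep if `r` is below the observed amount, switch otherwise"
succeeds with probability `1/2 + (F L - F S)/2 > 1/2`. -/
theorem blackwell_bet_cdf (S L : ℝ) (hSL : S < L)
    (μ : Measure ℝ) [IsProbabilityMeasure μ]
    (F : ℝ → ℝ) (hF : ∀ x, F x = (μ (Set.Iic x)).toReal)
    (hcont : Continuous F) (hmono : StrictMono F) :
    (1/2) * (1 - (μ (Set.Iio S)).toReal) + (1/2) * (μ (Set.Iio L)).toReal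
        = 1/2 + (F L - F S) / 2
      ∧ 1/2 < 1/2 + (F L - F S) / 2 := by
  rw [measure_Iio_toReal_eq μ F hF hcont, measure_Iio_toReal_eq μ F hF hcont]
  have := hmono hSL
  constructor <;> [ring; linarith]
end
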